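/- For 0 ≤ ξ ≤ 1 and a positive integer x, the number h(ξ, x) of fractions in the Farey sequence of order x (excluding 0) that are ≤ ξ satisfies h(ξ, x) = ∑_{n=1}^{x} ⌊nξ⌋·M(⌊x/n⌋) = ∑_{n=1}^{x} μ(n)·∑_{d=1}^{⌊x/n⌋} ⌊dξ⌋. -/

import Mathlib

open Finset ArithmeticFunction

/-- Mertens function `M(k) = ∑_{i=1}^{k} μ(i)`. -/
def Mertens (k : ℕ) : ℤ := ∑ i ∈ Finset.Icc 1 k, ArithmeticFunction.moebius i

/-- Number of fractions `a/b` in the Farey sequence of order `x` (irreducible,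
`1 ≤ a ≤ b ≤ x`, so excluding `0`) that are `≤ ξ`. -/
noncomputable def fareyCount (x : ℕ) (ξ : ℝ) : ℕ :=
  ((Finset.Icc 1 x ×ˢ Finset.Icc 1 x).filter
    (fun p => p.1 ≤ p.2 ∧ Nat.gcd p.1 p.2 = 1 ∧ (p.1 : ℝ) ≤ ξ * p.2)).card

open scoped ArithmeticFunction.Moebius

/-! Write `L(y)` for the number of pairs `(a, b) ∈ [1, y]²` with `a ≤ ξ b`; for `0 ≤ ξ ≤ 1` it is
`∑_{d ≤ y} ⌊d ξ⌋`. Since `ξ ≤ 1`, `h(ξ, x)` counts the coprime pairs among those counted by `L(x)`.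
Detecting coprimality by `∑_{n ∣ gcd(a, b)} μ(n)` and noting that the pairs with `n ∣ a`, `n ∣ b` are
`n` times the pairs counted by `L(x / n)` gives `h(ξ, x) = ∑_n μ(n) L(x / n)`. Summing over `n d ≤ x`
in the other order gives the Mertens form. -/

lemma sum_divisors_moebius (m : ℕ) :
    ∑ d ∈ m.divisors, (μ d : ℤ) = if m = 1 then 1 else 0 := by
  rw [← coe_mul_zeta_apply, moebius_mul_coe_zeta, one_apply]

lemma card_filter_coprime_eq_sum_moebius (s : Finset (ℕ × ℕ)) (x : ℕ)
    (hs : ∀ p ∈ s, 0 < p.1 ∧ p.1 ≤ x) :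
    (#{p ∈ s | p.1.Coprime p.2} : ℤ) = ∑ n ∈ Icc 1 x, μ n * #{p ∈ s | n ∣ p.1 ∧ n ∣ p.2} := by
  have common_divisors : ∀ p ∈ s, {n ∈ Icc 1 x | n ∣ p.1 ∧ n ∣ p.2} = (p.1.gcd p.2).divisors := by
    intro p hp
    obtain ⟨ha, hax⟩ := hs p hp
    ext n
    simp only [mem_filter, mem_Icc, Nat.mem_divisors, Nat.dvd_gcd_iff]
    constructor
    · rintro ⟨-, hdvd⟩
      exact ⟨hdvd, Nat.gcd_ne_zero_left ha.ne'⟩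
    · rintro ⟨⟨hna, hnb⟩, -⟩
      exact ⟨⟨Nat.pos_of_dvd_of_pos hna ha, (Nat.le_of_dvd ha hna).trans hax⟩, hna, hnb⟩
  calc (#{p ∈ s | p.1.Coprime p.2} : ℤ)
      = ∑ p ∈ s, ∑ n ∈ (p.1.gcd p.2).divisors, (μ n : ℤ) := by
        simp only [sum_divisors_moebius, ← Nat.coprime_iff_gcd_eq_one, sum_boole]
    _ = ∑ p ∈ s, ∑ n ∈ Icc 1 x, if n ∣ p.1 ∧ n ∣ p.2 then (μ n : ℤ) else 0 := by
        refine sum_congr rfl fun p hp => ?_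
        rw [← sum_filter, common_divisors p hp]
    _ = ∑ n ∈ Icc 1 x, μ n * #{p ∈ s | n ∣ p.1 ∧ n ∣ p.2} := by
        rw [sum_comm]
        refine sum_congr rfl fun n _ => ?_
        rw [← sum_boole, mul_sum]
        exact sum_congr rfl fun p _ => by split_ifs <;> simp

lemma mul_mem_Icc_one_iff {n : ℕ} (hn : 0 < n) (x d : ℕ) :
    n * d ∈ Icc 1 x ↔ d ∈ Icc 1 (x / n) := by
  simp only [mem_Icc, Nat.le_div_iff_mul_le hn, mul_comm d, Nat.one_le_iff_ne_zero,
    mul_ne_zero_iff, hn.ne', ne_eq, not_false_eq_true, true_and]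

lemma card_filter_dvd_Icc_prod (x : ℕ) {n : ℕ} (hn : 0 < n) (P : ℕ × ℕ → Prop) [DecidablePred P] :
    #{p ∈ {p ∈ Icc 1 x ×ˢ Icc 1 x | P p} | n ∣ p.1 ∧ n ∣ p.2} =
      #{p ∈ Icc 1 (x / n) ×ˢ Icc 1 (x / n) | P (n * p.1, n * p.2)} := by
  symm
  apply card_nbij (fun p => (n * p.1, n * p.2))
  · rintro ⟨a, b⟩ h
    simp only [coe_filter, mem_filter, mem_product, Set.mem_ofPred_eq, ← mul_mem_Icc_one_iff hn] at h ⊢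
    exact ⟨h, dvd_mul_right n a, dvd_mul_right n b⟩
  · rintro ⟨a, b⟩ - ⟨a', b'⟩ - h
    simp only [Prod.mk.injEq, mul_right_inj' hn.ne'] at h
    simp [h]
  · rintro ⟨_, _⟩ h
    simp only [coe_filter, mem_filter, mem_product, Set.mem_ofPred_eq] at h
    obtain ⟨⟨⟨ha, hb⟩, hP⟩, ⟨a, rfl⟩, ⟨b, rfl⟩⟩ := h
    refine ⟨(a, b), ?_, rfl⟩
    simp only [coe_filter, mem_product, Set.mem_ofPred_eq, ← mul_mem_Icc_one_iff hn]
    exact ⟨⟨ha, hb⟩, hP⟩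

lemma card_filter_dvd_le_mul (x : ℕ) {n : ℕ} (hn : 0 < n) (ξ : ℝ) :
    #{p ∈ {p ∈ Icc 1 x ×ˢ Icc 1 x | (p.1 : ℝ) ≤ ξ * p.2} | n ∣ p.1 ∧ n ∣ p.2} =
      #{p ∈ Icc 1 (x / n) ×ˢ Icc 1 (x / n) | (p.1 : ℝ) ≤ ξ * p.2} := by
  rw [card_filter_dvd_Icc_prod x hn]
  refine congrArg card (filter_congr fun p _ => ?_)
  push_cast
  rw [mul_left_comm, mul_le_mul_iff_right₀ (by exact_mod_cast hn)]

lemma filter_Icc_le_eq_Icc_floor {y : ℕ} {r : ℝ} (hr : r ≤ y) :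
    {a ∈ Icc 1 y | ((a : ℕ) : ℝ) ≤ r} = Icc 1 ⌊r⌋₊ := by
  ext a
  simp only [mem_filter, mem_Icc]
  constructor
  · rintro ⟨⟨ha, -⟩, har⟩
    exact ⟨ha, (Nat.le_floor_iff' (by omega)).2 har⟩
  · rintro ⟨ha, har⟩
    have har : (a : ℝ) ≤ r := (Nat.le_floor_iff' (by omega)).1 har
    exact ⟨⟨ha, by exact_mod_cast har.trans hr⟩, har⟩

lemma card_filter_le_mul_eq_sum_floor (y : ℕ) {ξ : ℝ} (hξ0 : 0 ≤ ξ) (hξ1 : ξ ≤ 1) :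
    (#{p ∈ Icc 1 y ×ˢ Icc 1 y | (p.1 : ℝ) ≤ ξ * p.2} : ℤ) = ∑ d ∈ Icc 1 y, ⌊(d : ℝ) * ξ⌋ := by
  rw [← sum_boole, sum_product_right]
  refine sum_congr rfl fun d hd => ?_
  have hdξ : ξ * d ≤ y := by
    have := (mem_Icc.1 hd).2
    calc ξ * d ≤ 1 * d := by gcongr
      _ ≤ y := by rw [one_mul]; exact_mod_cast this
  rw [sum_boole, filter_Icc_le_eq_Icc_floor hdξ, Nat.card_Icc, Nat.add_sub_cancel, mul_comm,
    Int.natCast_floor_eq_floor (by positivity)]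

lemma sum_mul_sum_Icc_div_comm {R : Type*} [CommSemiring R] (x : ℕ) (f g : ℕ → R) :
    ∑ n ∈ Icc 1 x, f n * ∑ d ∈ Icc 1 (x / n), g d =
      ∑ d ∈ Icc 1 x, g d * ∑ n ∈ Icc 1 (x / d), f n := by
  simp only [mul_sum]
  rw [sum_comm' (t' := Icc 1 x) (s' := fun d => Icc 1 (x / d))]
  · exact sum_congr rfl fun _ _ => sum_congr rfl fun _ _ => mul_comm _ _
  · have swap_factors {a b : ℕ} (ha : 1 ≤ a) (hb : 1 ≤ b) (hab : b ≤ x / a) : a ≤ x / b ∧ b ≤ x := by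
      have hab : a * b ≤ x := mul_comm a b ▸ (Nat.le_div_iff_mul_le ha).1 hab
      exact ⟨(Nat.le_div_iff_mul_le hb).2 hab, (Nat.le_mul_of_pos_left b ha).trans hab⟩
    intro n d
    simp only [mem_Icc]
    constructor
    · rintro ⟨⟨hn, -⟩, hd, hdn⟩
      obtain ⟨hnd, hdx⟩ := swap_factors hn hd hdn
      exact ⟨⟨hn, hnd⟩, hd, hdx⟩
    · rintro ⟨⟨hn, hnd⟩, hd, -⟩
      obtain ⟨hdn, hnx⟩ := swap_factors hd hn hnd
      exact ⟨⟨hn, hnx⟩, hd, hdn⟩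

lemma fareyCount_eq_card_filter_coprime (x : ℕ) {ξ : ℝ} (hξ1 : ξ ≤ 1) :
    fareyCount x ξ = #{p ∈ {p ∈ Icc 1 x ×ˢ Icc 1 x | (p.1 : ℝ) ≤ ξ * p.2} | p.1.Coprime p.2} := by
  rw [fareyCount, filter_filter]
  refine congrArg card (filter_congr fun p _ => ?_)
  have hle : (p.1 : ℝ) ≤ ξ * p.2 → p.1 ≤ p.2 := fun h => by
    have : ξ * p.2 ≤ p.2 := mul_le_of_le_one_left (Nat.cast_nonneg _) hξ1
    exact_mod_cast h.trans this
  rw [Nat.coprime_iff_gcd_eq_one]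
  constructor
  · exact fun ⟨_, hcop, hξ⟩ => ⟨hξ, hcop⟩
  · exact fun ⟨hξ, hcop⟩ => ⟨hle hξ, hcop, hξ⟩

theorem stmt_12_general (x : ℕ) (ξ : ℝ) (hξ0 : 0 ≤ ξ) (hξ1 : ξ ≤ 1) :
    ((fareyCount x ξ : ℕ) : ℤ) =
        ∑ n ∈ Finset.Icc 1 x, ⌊(n : ℝ) * ξ⌋ * Mertens (x / n) ∧
    ((fareyCount x ξ : ℕ) : ℤ) =
        ∑ n ∈ Finset.Icc 1 x, (ArithmeticFunction.moebius n : ℤ) *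
          ∑ d ∈ Finset.Icc 1 (x / n), ⌊(d : ℝ) * ξ⌋ := by
  have hmoebius : ((fareyCount x ξ : ℕ) : ℤ) =
      ∑ n ∈ Icc 1 x, μ n * ∑ d ∈ Icc 1 (x / n), ⌊(d : ℝ) * ξ⌋ := by
    rw [fareyCount_eq_card_filter_coprime x hξ1, card_filter_coprime_eq_sum_moebius _ x]
    · refine sum_congr rfl fun n hn => ?_
      rw [card_filter_dvd_le_mul x (mem_Icc.1 hn).1, card_filter_le_mul_eq_sum_floor _ hξ0 hξ1]
    · intro p hp
      simp only [mem_filter, mem_product, mem_Icc] at hp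
      exact ⟨hp.1.1.1, hp.1.1.2⟩
  refine ⟨?_, hmoebius⟩
  rw [hmoebius, sum_mul_sum_Icc_div_comm]
  rfl

theorem stmt_12 (x : ℕ) (hx : 0 < x) (ξ : ℝ) (hξ0 : 0 ≤ ξ) (hξ1 : ξ ≤ 1) :
    ((fareyCount x ξ : ℕ) : ℤ) =
        ∑ n ∈ Finset.Icc 1 x, ⌊(n : ℝ) * ξ⌋ * Mertens (x / n) ∧
    ((fareyCount x ξ : ℕ) : ℤ) =
        ∑ n ∈ Finset.Icc 1 x, (ArithmeticFunction.moebius n : ℤ) *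
          ∑ d ∈ Finset.Icc 1 (x / n), ⌊(d : ℝ) * ξ⌋ :=
  stmt_12_general x ξ hξ0 hξ1
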